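/- arXiv:1810.05956 — 3 statements merged into one kernel-verified Lean document; each statement's English description precedes it below -/
import Mathlib

section
/- Let C₀, κ > 0 and suppose φ ∈ C¹([0,∞)), ψ ∈ C⁰([0,∞)) satisfy |φ(r)| ≤ C₀ r ⟨r⟩^{-(κ+2)} and |φ'(r)| + |ψ(r)| ≤ C₀ ⟨r⟩^{-(κ+2)} for r ≥ 0. Let w be positive continuous with w(r) = 1/r for r ≥ r₀ and E₋ the associated kernel. Then for all t, r > 0: |∫_{|t-r|}^{t+r} E₋(t,r,y)(ψ(y) + φ'(y) + w(y)φ(y)) dy| ≲ C₀ r ⟨r⟩^{-2} ⟨t-r⟩^{-κ}. -/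
/-!
Since `w = 1/r` beyond `r₀`, `W s = W r₀ + log (s / r₀)` for `s ≥ r₀`; together with the
monotonicity of `W` this makes `exp (W s)` comparable to `1 + s`. The midpoint `(y - t + r) / 2`
lies in `[0, y]`, so the kernel is at most `exp (W y - W r) ≲ (1 + y) / (1 + r)`. As `w y * y` is
bounded, the source term is `≲ C₀ (1 + y)^{-(κ+2)}`, and the integrand is
`≲ C₀ (1 + r)⁻¹ (1 + y)^{-(κ+1)}`. Over an interval of length at most `2r` starting at `|t - r|`,
the integral of `(1 + y)^{-(κ+1)}` is bounded by `min (2r) (1/κ) · (1 + |t - r|)^{-κ}`, and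
`min (2r) (1/κ) / (1 + r) ≲ r / (1 + r)²`.
-/

open MeasureTheory Set Real

lemma sqrt_one_add_sq_le_one_add {y : ℝ} (hy : 0 ≤ y) : √(1 + y ^ 2) ≤ 1 + y := by
  simpa [abs_of_nonneg hy] using sqrt_one_add_norm_sq_le y

lemma one_add_rpow_neg_le_sqrt_one_add_sq {y s : ℝ} (hy : 0 ≤ y) (hs : 0 ≤ s) :
    (1 + y) ^ (-s) ≤ √(1 + y ^ 2) ^ (-s) :=
  rpow_le_rpow_of_nonpos (by positivity) (sqrt_one_add_sq_le_one_add hy) (neg_nonpos.2 hs)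

lemma sqrt_one_add_sq_rpow_neg_le {y s : ℝ} (hy : 0 ≤ y) (hs : 0 ≤ s) :
    √(1 + y ^ 2) ^ (-s) ≤ √2 ^ s * (1 + y) ^ (-s) := by
  have h : 1 + y ≤ √2 * √(1 + y ^ 2) := by
    simpa [abs_of_nonneg hy] using one_add_norm_le_sqrt_two_mul_sqrt y
  calc √(1 + y ^ 2) ^ (-s) = √2 ^ s * (√2 * √(1 + y ^ 2)) ^ (-s) := by
        rw [mul_rpow (by positivity) (by positivity), ← mul_assoc, ← rpow_add (by positivity),
          add_neg_cancel, rpow_zero, one_mul]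
    _ ≤ √2 ^ s * (1 + y) ^ (-s) :=
        mul_le_mul_of_nonneg_left (rpow_le_rpow_of_nonpos (by positivity) h (neg_nonpos.2 hs))
          (by positivity)

lemma intervalIntegrable_one_add_rpow {a b : ℝ} (ha : 0 ≤ a) (hb : 0 ≤ b) (p : ℝ) :
    IntervalIntegrable (fun y => (1 + y) ^ p) volume a b :=
  ContinuousOn.intervalIntegrable <| ContinuousOn.rpow_const (f := fun y => 1 + y) (by fun_prop)
    fun y hy => Or.inl (by linarith [(le_min ha hb).trans hy.1])

lemma integral_one_add_rpow_neg_le_div {a b κ : ℝ} (ha : 0 ≤ a) (hab : a ≤ b) (hκ : 0 < κ) :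
    ∫ y in a..b, (1 + y) ^ (-(κ + 1)) ≤ (1 + a) ^ (-κ) / κ := by
  have h0 : (0 : ℝ) ∉ uIcc (1 + a) (1 + b) := by
    rw [uIcc_of_le (by linarith)]; intro h; linarith [h.1]
  rw [intervalIntegral.integral_comp_add_left (fun x => x ^ (-(κ + 1))),
    integral_rpow (Or.inr ⟨by linarith, h0⟩), show -(κ + 1) + 1 = -κ by ring,
    div_neg, ← neg_div, neg_sub]
  gcongr
  linarith [rpow_nonneg (by linarith : (0 : ℝ) ≤ 1 + b) (-κ)]

lemma integral_one_add_rpow_neg_le_mul {a b κ : ℝ} (ha : 0 ≤ a) (hab : a ≤ b) (hκ : 0 ≤ κ) :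
    ∫ y in a..b, (1 + y) ^ (-(κ + 1)) ≤ (b - a) * (1 + a) ^ (-κ) := by
  calc ∫ y in a..b, (1 + y) ^ (-(κ + 1)) ≤ ∫ _ in a..b, (1 + a) ^ (-κ) := by
        refine intervalIntegral.integral_mono_on hab
          (intervalIntegrable_one_add_rpow ha (ha.trans hab) _) intervalIntegrable_const
          fun y hy => ?_
        calc (1 + y) ^ (-(κ + 1)) ≤ (1 + a) ^ (-(κ + 1)) :=
              rpow_le_rpow_of_nonpos (by positivity) (by linarith [hy.1]) (by linarith)
          _ ≤ (1 + a) ^ (-κ) := rpow_le_rpow_of_exponent_le (by linarith) (by linarith)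
    _ = (b - a) * (1 + a) ^ (-κ) := by simp

lemma inv_one_add_mul_integral_le {t r κ : ℝ} (ht : 0 < t) (hr : 0 < r) (hκ : 0 < κ) :
    (1 + r)⁻¹ * ∫ y in |t - r|..t + r, (1 + y) ^ (-(κ + 1)) ≤
      (4 + 2 / κ) * r * √(1 + r ^ 2) ^ (-(2 : ℝ)) * √(1 + (t - r) ^ 2) ^ (-κ) := by
  set a := |t - r|
  set J := ∫ y in a..t + r, (1 + y) ^ (-(κ + 1))
  set X := (1 + a) ^ (-κ)
  have ha : 0 ≤ a := abs_nonneg _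
  have hab : a ≤ t + r := abs_le.2 ⟨by linarith, by linarith⟩
  have hX : 0 ≤ X := by positivity
  have hJ : 0 ≤ J :=
    intervalIntegral.integral_nonneg hab fun y hy => rpow_nonneg (by linarith [hy.1]) _
  have hJ_tail : J ≤ X / κ := integral_one_add_rpow_neg_le_div ha hab hκ
  have hJ_short : J ≤ 2 * r * X := by
    refine (integral_one_add_rpow_neg_le_mul ha hab hκ.le).trans ?_
    gcongr
    linarith [le_abs_self (t - r)]
  have hkey : (1 + r) * J ≤ (4 + 2 / κ) * r * X := by
    rcases le_total r 1 with h | h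
    · nlinarith [mul_nonneg (mul_nonneg hr.le hX) (sub_nonneg.2 h),
        mul_nonneg (div_nonneg zero_le_two hκ.le) (mul_nonneg hr.le hX)]
    · calc (1 + r) * J ≤ (r + r) * (X / κ) := by gcongr
        _ = 2 / κ * r * X := by ring
        _ ≤ (4 + 2 / κ) * r * X := by nlinarith [mul_nonneg hr.le hX]
  have hr2 : ((1 + r) ^ 2)⁻¹ ≤ √(1 + r ^ 2) ^ (-(2 : ℝ)) := by
    have := one_add_rpow_neg_le_sqrt_one_add_sq hr.le zero_le_two
    rwa [rpow_neg (by positivity), rpow_two] at this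
  have hXa : X ≤ √(1 + (t - r) ^ 2) ^ (-κ) := by
    rw [← sq_abs (t - r)]; exact one_add_rpow_neg_le_sqrt_one_add_sq ha hκ.le
  calc (1 + r)⁻¹ * J = ((1 + r) ^ 2)⁻¹ * ((1 + r) * J) := by field_simp
    _ ≤ √(1 + r ^ 2) ^ (-(2 : ℝ)) * ((4 + 2 / κ) * r * √(1 + (t - r) ^ 2) ^ (-κ)) := by
        refine mul_le_mul hr2 (hkey.trans (by gcongr)) (by positivity) (by positivity)
    _ = _ := by ring

lemma monotoneOn_integral_of_nonneg {w : ℝ → ℝ} (hwc : ContinuousOn w (Ici 0))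
    (hwpos : ∀ r ≥ (0 : ℝ), 0 < w r) : MonotoneOn (fun r => ∫ τ in (0 : ℝ)..r, w τ) (Ici 0) :=
  fun a ha b _ hab => intervalIntegral.integral_mono_interval le_rfl ha hab
    ((ae_restrict_iff' measurableSet_Ioc).2 (.of_forall fun τ hτ => (hwpos τ hτ.1.le).le))
    (hwc.mono (by rw [uIcc_of_le (le_trans ha hab)]; exact Icc_subset_Ici_self)).intervalIntegrable

lemma integral_eq_add_log {w : ℝ → ℝ} {r₀ s : ℝ} (hr₀ : 0 < r₀) (hwc : ContinuousOn w (Ici 0))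
    (hw : ∀ r ≥ r₀, w r = 1 / r) (hs : r₀ ≤ s) :
    ∫ τ in (0 : ℝ)..s, w τ = (∫ τ in (0 : ℝ)..r₀, w τ) + log (s / r₀) := by
  have hint : ∀ b ≥ 0, IntervalIntegrable w volume 0 b := fun b hb =>
    (hwc.mono (by rw [uIcc_of_le hb]; exact Icc_subset_Ici_self)).intervalIntegrable
  have htail : ∫ τ in r₀..s, w τ = log (s / r₀) := by
    rw [intervalIntegral.integral_congr fun τ hτ => hw τ (by rw [uIcc_of_le hs] at hτ; exact hτ.1),
      integral_one_div fun h => by rw [uIcc_of_le hs] at h; linarith [h.1]]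
  rw [← htail, intervalIntegral.integral_add_adjacent_intervals (hint r₀ hr₀.le)]
  exact (hint r₀ hr₀.le).symm.trans (hint s (hr₀.le.trans hs))

section LogarithmicGrowth

variable {W : ℝ → ℝ} {r₀ : ℝ}

lemma exp_le_mul_one_add (hr₀ : 0 < r₀) (hmono : MonotoneOn W (Ici 0))
    (hlog : ∀ s ≥ r₀, W s = W r₀ + log (s / r₀)) {s : ℝ} (hs : 0 ≤ s) :
    exp (W s) ≤ exp (W r₀) * (1 + r₀⁻¹) * (1 + s) := by
  rcases le_total s r₀ with h | h
  · calc exp (W s) ≤ exp (W r₀) * 1 := by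
          rw [mul_one]; exact exp_le_exp.2 (hmono hs hr₀.le h)
      _ ≤ exp (W r₀) * ((1 + r₀⁻¹) * (1 + s)) := by
          gcongr; nlinarith [inv_pos.2 hr₀]
      _ = _ := by ring
  · rw [hlog s h, exp_add, exp_log (div_pos (hr₀.trans_le h) hr₀), mul_assoc]
    gcongr
    rw [div_eq_mul_inv]
    nlinarith [inv_pos.2 hr₀]

lemma one_add_le_mul_exp (hr₀ : 0 < r₀) (hW0 : W 0 = 0) (hmono : MonotoneOn W (Ici 0))
    (hlog : ∀ s ≥ r₀, W s = W r₀ + log (s / r₀)) {s : ℝ} (hs : 0 ≤ s) :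
    1 + s ≤ (1 + r₀) * exp (W s) := by
  have hexp : ∀ x ≥ 0, 1 ≤ exp (W x) := fun x hx =>
    one_le_exp (hW0 ▸ hmono self_mem_Ici hx hx)
  rcases le_total s r₀ with h | h
  · nlinarith [hexp s hs]
  · rw [hlog s h, exp_add, exp_log (div_pos (hr₀.trans_le h) hr₀)]
    have : 1 + s ≤ (1 + r₀) * (s / r₀) := by
      rw [mul_div_assoc', le_div_iff₀ hr₀]; nlinarith
    nlinarith [hexp r₀ hr₀.le, div_pos (hr₀.trans_le h) hr₀]

lemma exists_exp_sub_le (hr₀ : 0 < r₀) (hW0 : W 0 = 0) (hmono : MonotoneOn W (Ici 0))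
    (hlog : ∀ s ≥ r₀, W s = W r₀ + log (s / r₀)) :
    ∃ K > 0, ∀ r ≥ (0 : ℝ), ∀ y ≥ (0 : ℝ), exp (W y - W r) ≤ K * ((1 + y) / (1 + r)) := by
  refine ⟨exp (W r₀) * (1 + r₀⁻¹) * (1 + r₀), by positivity, fun r hr y hy => ?_⟩
  rw [exp_sub, div_le_iff₀ (exp_pos _)]
  calc exp (W y) ≤ exp (W r₀) * (1 + r₀⁻¹) * (1 + y) := exp_le_mul_one_add hr₀ hmono hlog hy
    _ = exp (W r₀) * (1 + r₀⁻¹) * ((1 + y) / (1 + r)) * (1 + r) := by field_simp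
    _ ≤ exp (W r₀) * (1 + r₀⁻¹) * ((1 + y) / (1 + r)) * ((1 + r₀) * exp (W r)) := by
        gcongr; exact one_add_le_mul_exp hr₀ hW0 hmono hlog hr
    _ = _ := by ring

end LogarithmicGrowth

lemma exp_kernel_le {W : ℝ → ℝ} (hmono : MonotoneOn W (Ici 0)) {r m y : ℝ} (hm : 0 ≤ m)
    (hmy : m ≤ y) : exp (-W r + 2 * W m - W y) ≤ exp (W y - W r) :=
  exp_le_exp.2 (by linarith [hmono hm (hm.trans hmy) hmy])

lemma exists_abs_mul_le_of_eq_inv {w : ℝ → ℝ} {r₀ : ℝ} (hwc : ContinuousOn w (Ici 0))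
    (hw : ∀ r ≥ r₀, w r = 1 / r) : ∃ M ≥ (0 : ℝ), ∀ y ≥ (0 : ℝ), |w y| * y ≤ M := by
  obtain ⟨C, hC⟩ := (isCompact_Icc (a := 0) (b := r₀)).exists_bound_of_continuousOn
    (hwc.mono Icc_subset_Ici_self)
  refine ⟨max 1 (C * r₀), le_max_of_le_left zero_le_one, fun y hy => ?_⟩
  rcases le_total y r₀ with h | h
  · have hC0 : 0 ≤ C := (norm_nonneg _).trans (hC y ⟨hy, h⟩)
    exact le_max_of_le_right (mul_le_mul (hC y ⟨hy, h⟩) h hy hC0)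
  · refine le_max_of_le_left ?_
    rw [hw y h, abs_of_nonneg (by positivity)]
    rcases hy.eq_or_lt with rfl | hy
    · simp
    · rw [one_div_mul_cancel hy.ne']

lemma abs_source_le {y s C₀ M a b c d : ℝ} (hy : 0 ≤ y) (hs : 0 ≤ s) (hC₀ : 0 ≤ C₀)
    (hd : |d| ≤ C₀ * y * √(1 + y ^ 2) ^ (-s)) (hab : |b| + |a| ≤ C₀ * √(1 + y ^ 2) ^ (-s))
    (hc : |c| * y ≤ M) :
    |a + b + c * d| ≤ (1 + M) * √2 ^ s * C₀ * (1 + y) ^ (-s) := by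
  set P := √(1 + y ^ 2) ^ (-s)
  have hP : 0 ≤ P := by positivity
  calc |a + b + c * d| ≤ |b| + |a| + |c| * |d| := by
        rw [← abs_mul]; linarith [abs_add_le (a + b) (c * d), abs_add_le a b]
    _ ≤ C₀ * P + |c| * (C₀ * y * P) := by gcongr
    _ = C₀ * P + (|c| * y) * (C₀ * P) := by ring
    _ ≤ C₀ * P + M * (C₀ * P) := by gcongr
    _ = (1 + M) * C₀ * P := by ring
    _ ≤ (1 + M) * C₀ * (√2 ^ s * (1 + y) ^ (-s)) := by
        have : 0 ≤ M := (by positivity : 0 ≤ |c| * y).trans hc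
        gcongr; exact sqrt_one_add_sq_rpow_neg_le hy hs
    _ = _ := by ring

lemma abs_mul_le_inv_one_add_mul_rpow {e S K B y r κ : ℝ} (he : 0 ≤ e) (hy : 0 ≤ y) (hr : 0 ≤ r)
    (hK : 0 ≤ K) (he_le : e ≤ K * ((1 + y) / (1 + r))) (hS : |S| ≤ B * (1 + y) ^ (-(κ + 2))) :
    |e * S| ≤ K * B * ((1 + r)⁻¹ * (1 + y) ^ (-(κ + 1))) := by
  have hy1 : 0 < 1 + y := by linarith
  calc |e * S| ≤ K * ((1 + y) / (1 + r)) * (B * (1 + y) ^ (-(κ + 2))) := by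
        rw [abs_mul, abs_of_nonneg he]
        exact mul_le_mul he_le hS (abs_nonneg _) (by positivity)
    _ = K * B * ((1 + r)⁻¹ * ((1 + y) ^ (1 : ℝ) * (1 + y) ^ (-(κ + 2)))) := by
        rw [rpow_one]; ring
    _ = K * B * ((1 + r)⁻¹ * (1 + y) ^ (-(κ + 1))) := by
        rw [← rpow_add hy1]; ring_nf

theorem stmt8_general (w : ℝ → ℝ) (r₀ : ℝ) (hr₀ : 0 < r₀)
    (hwc : ContinuousOn w (Set.Ici (0:ℝ)))
    (hwpos : ∀ r ≥ (0:ℝ), 0 < w r)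
    (hw : ∀ r ≥ r₀, w r = 1 / r)
    (W : ℝ → ℝ) (hW : ∀ r : ℝ, W r = ∫ τ in (0:ℝ)..r, w τ)
    (κ : ℝ) (hκ : 0 < κ) :
    ∃ K : ℝ, 0 < K ∧
      ∀ C₀ : ℝ, 0 < C₀ → ∀ φ ψ : ℝ → ℝ,
        ContDiffOn ℝ 1 φ (Set.Ici (0:ℝ)) →
        ContinuousOn ψ (Set.Ici (0:ℝ)) →
        (∀ r ≥ (0:ℝ), |φ r| ≤ C₀ * r * Real.sqrt (1 + r ^ 2) ^ (-(κ + 2))) →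
        (∀ r ≥ (0:ℝ), |deriv φ r| + |ψ r| ≤ C₀ * Real.sqrt (1 + r ^ 2) ^ (-(κ + 2))) →
        ∀ t r : ℝ, 0 < t → 0 < r →
          |∫ y in (|t - r|)..(t + r),
              Real.exp (-W r + 2 * W ((y - t + r) / 2) - W y) *
                (ψ y + deriv φ y + w y * φ y)| ≤
            K * C₀ * r * Real.sqrt (1 + r ^ 2) ^ (-(2:ℝ)) *
              Real.sqrt (1 + (t - r) ^ 2) ^ (-κ) := by
  have hmono : MonotoneOn W (Ici 0) := funext hW ▸ monotoneOn_integral_of_nonneg hwc hwpos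
  obtain ⟨K, hK, hE⟩ := exists_exp_sub_le hr₀ (by rw [hW, intervalIntegral.integral_same]) hmono
    fun s hs => by rw [hW, hW]; exact integral_eq_add_log hr₀ hwc hw hs
  obtain ⟨M, hM, hwM⟩ := exists_abs_mul_le_of_eq_inv hwc hw
  refine ⟨K * (1 + M) * √2 ^ (κ + 2) * (4 + 2 / κ), by positivity, ?_⟩
  intro C₀ hC₀ φ ψ _ _ hφ hφψ t r ht hr
  set c := K * ((1 + M) * √2 ^ (κ + 2) * C₀)
  have hab : |t - r| ≤ t + r := abs_le.2 ⟨by linarith, by linarith⟩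
  have hpt : ∀ y ∈ Ioc |t - r| (t + r), ‖exp (-W r + 2 * W ((y - t + r) / 2) - W y) *
      (ψ y + deriv φ y + w y * φ y)‖ ≤ c * ((1 + r)⁻¹ * (1 + y) ^ (-(κ + 1))) := by
    intro y hy
    have hy0 : 0 ≤ y := (abs_nonneg _).trans hy.1.le
    have hm : 0 ≤ (y - t + r) / 2 := by linarith [le_abs_self (t - r), hy.1]
    have hmy : (y - t + r) / 2 ≤ y := by linarith [neg_abs_le (t - r), hy.1]
    exact abs_mul_le_inv_one_add_mul_rpow (exp_pos _).le hy0 hr.le hK.le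
      ((exp_kernel_le hmono hm hmy).trans (hE r hr.le y hy0))
      (abs_source_le hy0 (by linarith) hC₀.le (hφ y hy0) (hφψ y hy0) (hwM y hy0))
  calc |∫ y in |t - r|..t + r, exp (-W r + 2 * W ((y - t + r) / 2) - W y) *
        (ψ y + deriv φ y + w y * φ y)|
      ≤ ∫ y in |t - r|..t + r, c * ((1 + r)⁻¹ * (1 + y) ^ (-(κ + 1))) :=
        intervalIntegral.norm_integral_le_of_norm_le hab (.of_forall hpt) <|
          ((intervalIntegrable_one_add_rpow (abs_nonneg _) (by linarith) _).const_mul _).const_mul _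
    _ = c * ((1 + r)⁻¹ * ∫ y in |t - r|..t + r, (1 + y) ^ (-(κ + 1))) := by
        simp only [intervalIntegral.integral_const_mul]
    _ ≤ c * ((4 + 2 / κ) * r * √(1 + r ^ 2) ^ (-(2 : ℝ)) * √(1 + (t - r) ^ 2) ^ (-κ)) :=
        mul_le_mul_of_nonneg_left (inv_one_add_mul_integral_le ht hr hκ) (by positivity)
    _ = _ := by ring

/-- Estimate for the homogeneous part:
|∫_{|t−r|}^{t+r} E₋(t,r,y)(ψ(y)+φ'(y)+w(y)φ(y)) dy| ≲ C₀ r ⟨r⟩^{−2} ⟨t−r⟩^{−κ}. -/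
theorem stmt8 (w : ℝ → ℝ) (r₀ : ℝ) (hr₀ : 0 < r₀)
    (hwc : ContinuousOn w (Set.Ici (0:ℝ)))
    (hwpos : ∀ r ≥ (0:ℝ), 0 < w r)
    (hwanti : AntitoneOn w (Set.Ioi (0:ℝ)))
    (hw : ∀ r ≥ r₀, w r = 1 / r)
    (W : ℝ → ℝ) (hW : ∀ r : ℝ, W r = ∫ τ in (0:ℝ)..r, w τ)
    (κ : ℝ) (hκ : 0 < κ) :
    ∃ K : ℝ, 0 < K ∧
      ∀ C₀ : ℝ, 0 < C₀ → ∀ φ ψ : ℝ → ℝ,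
        ContDiffOn ℝ 1 φ (Set.Ici (0:ℝ)) →
        ContinuousOn ψ (Set.Ici (0:ℝ)) →
        (∀ r ≥ (0:ℝ), |φ r| ≤ C₀ * r * Real.sqrt (1 + r ^ 2) ^ (-(κ + 2))) →
        (∀ r ≥ (0:ℝ), |deriv φ r| + |ψ r| ≤ C₀ * Real.sqrt (1 + r ^ 2) ^ (-(κ + 2))) →
        ∀ t r : ℝ, 0 < t → 0 < r →
          |∫ y in (|t - r|)..(t + r),
              Real.exp (-W r + 2 * W ((y - t + r) / 2) - W y) *
                (ψ y + deriv φ y + w y * φ y)| ≤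
            K * C₀ * r * Real.sqrt (1 + r ^ 2) ^ (-(2:ℝ)) *
              Real.sqrt (1 + (t - r) ^ 2) ^ (-κ) :=
  stmt8_general w r₀ hr₀ hwc hwpos hw W hW κ hκ
end

section
/- Let C > 0 and p > 1. Suppose f : [0,∞) → ℝ satisfies f(t) ≥ 1 for all t ≥ 0 and f(t) ≥ C ∫₀ᵗ (1 - e^{-(t-τ)}) f(τ)ᵖ dτ for all t ≥ 0 (in particular the integral is finite whenever f is defined). Then f cannot be defined (finite) on all of [0,∞); i.e., f blows up in finite time. -/
/-!
Since `f ≥ 1`, the kernel bound `1 - e^{-δ} ≥ δ / 2` (for `δ ≤ 1`) shows that `f` grows at least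
linearly, so `f ≥ e^b` on some half-line `[T, ∞)`. More generally, if `f ≥ A` on `[T, ∞)` then
`f ≥ (C / 2) δ² Aᵖ` on `[T + 2δ, ∞)`. Iterating this with the summable step sizes `δ_k = e^{-k}`
gives `f ≥ e^{a k + b}` on `[T + 4, ∞)` for every `k`, once `(p - 1) a ≥ 2` and `b` is large:
the gain `Aᵖ / A = e^{(p - 1)(a k + b)}` beats the loss `δ_k² = e^{-2k}`. This is absurd at
`t = T + 4`.
-/

open Real MeasureTheory intervalIntegral

theorem half_le_one_sub_exp_neg {x : ℝ} (hx0 : 0 ≤ x) (hx1 : x ≤ 1) : x / 2 ≤ 1 - exp (-x) := by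
  have h : exp (-x) * (1 + x) ≤ 1 := by
    calc exp (-x) * (1 + x) ≤ exp (-x) * exp x := by
          gcongr; linarith [add_one_le_exp x]
      _ = 1 := by rw [← exp_add, neg_add_cancel, exp_zero]
  nlinarith [exp_pos (-x), mul_nonneg hx0 (sub_nonneg.2 hx1)]

theorem exp_add_le_half_mul_exp_neg_sq_mul_rpow {C p a b x : ℝ} (hC : 0 < C)
    (ha : 2 ≤ (p - 1) * a) (hb : a - log (C / 2) ≤ (p - 1) * b) (hx : 0 ≤ x) :
    exp (a * (x + 1) + b) ≤ C / 2 * exp (-x) ^ 2 * exp (a * x + b) ^ p := by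
  rw [← exp_log (half_pos hC), ← exp_nat_mul, ← exp_mul, ← exp_add, ← exp_add, exp_le_exp]
  push_cast
  nlinarith [mul_nonneg hx (sub_nonneg.2 ha)]

structure IntegralSupersolution (C p : ℝ) (f : ℝ → ℝ) : Prop where
  one_le : ∀ t ≥ (0 : ℝ), 1 ≤ f t
  intervalIntegrable : ∀ t ≥ (0 : ℝ),
    IntervalIntegrable (fun τ => (1 - exp (-(t - τ))) * f τ ^ p) volume 0 t
  le : ∀ t ≥ (0 : ℝ), C * ∫ τ in (0 : ℝ)..t, (1 - exp (-(t - τ))) * f τ ^ p ≤ f t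

namespace IntegralSupersolution

variable {C p : ℝ} {f : ℝ → ℝ}

theorem integrand_nonneg (hf : IntegralSupersolution C p f) {t τ : ℝ} (hτ : 0 ≤ τ)
    (hτt : τ ≤ t) : 0 ≤ (1 - exp (-(t - τ))) * f τ ^ p :=
  mul_nonneg (sub_nonneg.2 (exp_le_one_iff.2 (by linarith)))
    (rpow_nonneg (zero_le_one.trans (hf.one_le τ hτ)) p)

/-- Only the part `[T, T + L]` of the integral is kept, where the kernel is at least
`1 - e^{-δ}`. -/
theorem mul_le_of_forall_le (hf : IntegralSupersolution C p f) (hC : 0 ≤ C) (hp : 0 ≤ p)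
    {A T δ L t : ℝ} (hA : 0 ≤ A) (hT : 0 ≤ T) (hδ : 0 ≤ δ) (hL : 0 ≤ L)
    (hfA : ∀ τ ≥ T, A ≤ f τ) (ht : T + δ + L ≤ t) :
    C * ((1 - exp (-δ)) * A ^ p * L) ≤ f t := by
  have ht0 : 0 ≤ t := by linarith
  have hpiece : (1 - exp (-δ)) * A ^ p * L
      ≤ ∫ τ in T..T + L, (1 - exp (-(t - τ))) * f τ ^ p := by
    have hsub : IntervalIntegrable (fun τ => (1 - exp (-(t - τ))) * f τ ^ p) volume T (T + L) :=
      (hf.intervalIntegrable t ht0).mono_set (by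
        rw [Set.uIcc_of_le (by linarith), Set.uIcc_of_le ht0]
        exact Set.Icc_subset_Icc hT (by linarith))
    calc (1 - exp (-δ)) * A ^ p * L = ∫ _ in T..T + L, (1 - exp (-δ)) * A ^ p := by
          rw [intervalIntegral.integral_const, add_sub_cancel_left, smul_eq_mul, mul_comm]
      _ ≤ _ := by
          refine integral_mono_on (by linarith) intervalIntegrable_const hsub fun τ hτ => ?_
          have hkernel : exp (-(t - τ)) ≤ exp (-δ) := exp_le_exp.2 (by linarith [hτ.2])
          have hδ' : exp (-δ) ≤ 1 := exp_le_one_iff.2 (neg_nonpos.2 hδ)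
          exact mul_le_mul (by linarith) (rpow_le_rpow hA (hfA τ hτ.1) hp)
            (rpow_nonneg hA p) (by linarith)
  have hwhole : ∫ τ in T..T + L, (1 - exp (-(t - τ))) * f τ ^ p
      ≤ ∫ τ in (0 : ℝ)..t, (1 - exp (-(t - τ))) * f τ ^ p := by
    refine integral_mono_interval hT (by linarith) (by linarith) ?_ (hf.intervalIntegrable t ht0)
    filter_upwards [ae_restrict_mem measurableSet_Ioc] with τ hτ
    exact hf.integrand_nonneg hτ.1.le hτ.2
  exact (mul_le_mul_of_nonneg_left (hpiece.trans hwhole) hC).trans (hf.le t ht0)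

theorem le_of_one_add_two_mul_div_le (hf : IntegralSupersolution C p f) (hC : 0 < C)
    (hp : 0 ≤ p) {M t : ℝ} (hM : 0 ≤ M) (ht : 1 + 2 * M / C ≤ t) : M ≤ f t := by
  have hlin := hf.mul_le_of_forall_le (t := t) hC.le hp zero_le_one le_rfl zero_le_one
    (by positivity : 0 ≤ 2 * M / C) (fun τ hτ => hf.one_le τ hτ) (by rwa [zero_add])
  have hkernel := half_le_one_sub_exp_neg zero_le_one le_rfl
  rw [one_rpow, mul_one] at hlin
  calc M = C * (1 / 2 * (2 * M / C)) := by field_simp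
    _ ≤ C * ((1 - exp (-1)) * (2 * M / C)) := by gcongr
    _ ≤ f t := hlin

theorem forall_le_of_forall_le (hf : IntegralSupersolution C p f) (hC : 0 ≤ C) (hp : 0 ≤ p)
    {A T δ : ℝ} (hA : 0 ≤ A) (hT : 0 ≤ T) (hδ0 : 0 ≤ δ) (hδ1 : δ ≤ 1)
    (hfA : ∀ τ ≥ T, A ≤ f τ) : ∀ t ≥ T + 2 * δ, C / 2 * δ ^ 2 * A ^ p ≤ f t := by
  intro t ht
  calc C / 2 * δ ^ 2 * A ^ p = C * (δ / 2 * A ^ p * δ) := by ring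
    _ ≤ C * ((1 - exp (-δ)) * A ^ p * δ) := by
        gcongr
        exact half_le_one_sub_exp_neg hδ0 hδ1
    _ ≤ f t := hf.mul_le_of_forall_le hC hp hA hT hδ0 hδ0 hfA (by linarith)

theorem forall_exp_le_of_forall_exp_le (hf : IntegralSupersolution C p f) (hC : 0 < C)
    (hp : 0 ≤ p) {a b T : ℝ} (ha : 2 ≤ (p - 1) * a) (hb : a - log (C / 2) ≤ (p - 1) * b)
    (hT : 0 ≤ T) (hfT : ∀ t ≥ T, exp b ≤ f t) (k : ℕ) :
    ∀ t ≥ T + 4 * (1 - exp (-k)), exp (a * k + b) ≤ f t := by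
  induction k with
  | zero => simpa using hfT
  | succ k ih =>
    intro t ht
    have hδ : exp (-k) ≤ 1 := exp_le_one_iff.2 (by simp)
    have hstep : T + 4 * (1 - exp (-k)) + 2 * exp (-k) ≤ t := by
      have hdecay : exp (-(k + 1 : ℕ)) = exp (-k) * exp (-1) := by
        push_cast; rw [← exp_add, neg_add]
      have hkernel := half_le_one_sub_exp_neg zero_le_one le_rfl
      rw [hdecay] at ht
      nlinarith [exp_pos (-(k : ℝ))]
    have hTk : 0 ≤ T + 4 * (1 - exp (-k)) := by linarith
    push_cast
    exact (exp_add_le_half_mul_exp_neg_sq_mul_rpow hC ha hb k.cast_nonneg).trans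
      (hf.forall_le_of_forall_le hC.le hp (exp_pos _).le hTk (exp_pos _).le hδ ih
        t hstep)

end IntegralSupersolution

theorem not_integralSupersolution {C p : ℝ} (hC : 0 < C) (hp : 1 < p) (f : ℝ → ℝ) :
    ¬ IntegralSupersolution C p f := by
  intro hf
  have hp0 : 0 ≤ p := by linarith
  have hp1 : 0 < p - 1 := by linarith
  set a := 2 / (p - 1)
  set b := (a - log (C / 2)) / (p - 1)
  have ha : 2 ≤ (p - 1) * a := (mul_div_cancel₀ _ hp1.ne').ge
  have hb : a - log (C / 2) ≤ (p - 1) * b := (mul_div_cancel₀ _ hp1.ne').ge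
  set T := 1 + 2 * exp b / C
  have hT : 0 ≤ T := by positivity
  have hbound (k : ℕ) : exp (a * k + b) ≤ f (T + 4) :=
    hf.forall_exp_le_of_forall_exp_le hC hp0 ha hb hT
      (fun _ ht => hf.le_of_one_add_two_mul_div_le hC hp0 (exp_pos b).le ht) k _
      (by linarith [exp_pos (-(k : ℝ))])
  obtain ⟨k, hk⟩ := exists_nat_gt ((f (T + 4) - b) / a)
  have hak : f (T + 4) < a * k + b := by
    rw [div_lt_iff₀ (by positivity)] at hk
    linarith
  linarith [hbound k, add_one_le_exp (a * k + b)]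

/-- Lemma A.2: if f ≥ 1 and f(t) ≥ C∫₀ᵗ(1−e^{−(t−τ)})f(τ)ᵖ dτ for all t ≥ 0,
then no such f can exist globally on [0,∞); f blows up in finite time. -/
theorem stmt14 (C p : ℝ) (hC : 0 < C) (hp : 1 < p) :
    ¬ ∃ f : ℝ → ℝ,
      (∀ t ≥ (0:ℝ), 1 ≤ f t) ∧
      (∀ t ≥ (0:ℝ), IntervalIntegrable
        (fun τ => (1 - Real.exp (-(t - τ))) * f τ ^ p) MeasureTheory.volume 0 t) ∧
      (∀ t ≥ (0:ℝ),
        C * ∫ τ in (0:ℝ)..t, (1 - Real.exp (-(t - τ))) * f τ ^ p ≤ f t) := by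
  rintro ⟨f, hone, hint, hle⟩
  exact not_integralSupersolution hC hp f ⟨hone, hint, hle⟩
end

section
/- Let C₁, C₂ > 0, α, β ≥ 0, ε ∈ (0,1], p > 1, and κ = 1. Suppose f : [1, T*) → ℝ satisfies f(y) ≥ C₁ε^α and f(y) ≥ C₂ε^β ∫₁^y (1 - η/y) f(η)ᵖ/η dη for all y in its (maximal) domain. Then T* < ∞ and there is a constant C* = C*(C₁,C₂,p) such that T* ≤ exp(C* ε^{-((p-1)α+β)}). -/
/-!
If `f ≥ m` on `[w, T)`, then for `y ≥ w e^δ` the kernel `(1 - η/y)/η` has mass at least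
`δ/(2+δ) · δ/2` on `[y e^{-δ}, y e^{-δ/2}]`, so the integral inequality gives `f(y) ≥ 2m` as soon
as `D m^{p-1} δ² ≥ 4(2+δ)`. Starting from `m = C₁ε^α` and doubling again and again, the `j`-th
doubling costs the log-time `δⱼ = sⱼ(sⱼ+2)` with `sⱼ ≍ ε^{-μ/2} 2^{-j(p-1)/2}`, `μ = (p-1)α+β`.
These form a geometric series of total at most `C* ε^{-μ}`, so `f` would be unbounded at
`exp(C* ε^{-μ}) < T`.
-/

open MeasureTheory intervalIntegral Real Set Finset

theorem div_one_add_le_one_sub_exp_neg {s : ℝ} (hs : 0 ≤ s) : s / (1 + s) ≤ 1 - exp (-s) := by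
  have h : exp (-s) ≤ (1 + s)⁻¹ := by
    rw [exp_neg]
    exact inv_anti₀ (by linarith) (by linarith [add_one_le_exp s])
  have h' : s / (1 + s) = 1 - (1 + s)⁻¹ := by field_simp; ring
  linarith

theorem mul_log_div_le_integral {g : ℝ → ℝ} {a b c : ℝ} (ha : 0 < a) (hab : a ≤ b)
    (hg : IntervalIntegrable g volume a b) (hle : ∀ η ∈ Icc a b, c / η ≤ g η) :
    c * log (b / a) ≤ ∫ η in a..b, g η := by
  have hcont : ContinuousOn (fun η : ℝ => c / η) (uIcc a b) := by
    refine continuousOn_const.div continuousOn_id fun η hη => ?_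
    rw [uIcc_of_le hab] at hη
    exact (ha.trans_le hη.1).ne'
  calc c * log (b / a) = ∫ η in a..b, c / η := by
        simp only [div_eq_mul_inv c, intervalIntegral.integral_const_mul,
          integral_inv_of_pos ha (ha.trans_le hab)]
    _ ≤ ∫ η in a..b, g η := integral_mono_on hab hcont.intervalIntegrable hg hle

theorem sum_range_geom_mul_add_two_le {a r : ℝ} (ha : 0 ≤ a) (hr₀ : 0 ≤ r) (hr₁ : r < 1) (n : ℕ) :
    ∑ i ∈ range n, a * r ^ i * (a * r ^ i + 2) ≤ a ^ 2 / (1 - r ^ 2) + 2 * a / (1 - r) := by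
  have hr₁' : r ^ 2 < 1 := by nlinarith
  have geom : ∀ x : ℝ, 0 ≤ x → x < 1 → ∑ i ∈ range n, x ^ i ≤ 1 / (1 - x) := fun x h₀ h₁ => by
    have := geom_sum_Ico_le_of_lt_one (m := 0) (n := n) h₀ h₁
    rwa [← range_eq_Ico, pow_zero] at this
  calc ∑ i ∈ range n, a * r ^ i * (a * r ^ i + 2)
      = a ^ 2 * ∑ i ∈ range n, (r ^ 2) ^ i + 2 * a * ∑ i ∈ range n, r ^ i := by
        rw [mul_sum, mul_sum, ← sum_add_distrib]
        exact sum_congr rfl fun i _ => by ring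
    _ ≤ a ^ 2 * (1 / (1 - r ^ 2)) + 2 * a * (1 / (1 - r)) := by
        gcongr
        exacts [geom _ (by positivity) hr₁', geom r hr₀ hr₁]
    _ = a ^ 2 / (1 - r ^ 2) + 2 * a / (1 - r) := by ring

theorem two_mul_le_of_le_on_Ico {f : ℝ → ℝ} {D p T m w δ : ℝ} (hD : 0 ≤ D) (hp : 0 ≤ p)
    (hm : 0 < m) (hw : 1 ≤ w) (hδ : 0 ≤ δ)
    (hf₀ : ∀ y ∈ Ico 1 T, 0 ≤ f y)
    (hint : ∀ y ∈ Ico 1 T, IntervalIntegrable (fun η => (1 - η / y) * f η ^ p / η) volume 1 y)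
    (hineq : ∀ y ∈ Ico 1 T, D * ∫ η in (1:ℝ)..y, (1 - η / y) * f η ^ p / η ≤ f y)
    (hcond : 4 * (2 + δ) ≤ D * m ^ (p - 1) * δ ^ 2)
    (hlow : ∀ y ∈ Ico w T, m ≤ f y) :
    ∀ y ∈ Ico (w * exp δ) T, 2 * m ≤ f y := by
  rintro y ⟨hwy, hyT⟩
  have h1y : 1 ≤ y := by nlinarith [one_le_exp hδ]
  have hy : 0 < y := by linarith
  set a := y * exp (-δ)
  set b := y * exp (-(δ / 2))
  have hwa : w ≤ a := calc
    w = w * exp δ * exp (-δ) := by rw [mul_assoc, ← exp_add, add_neg_cancel, exp_zero, mul_one]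
    _ ≤ a := mul_le_mul_of_nonneg_right hwy (exp_pos _).le
  have hab : a ≤ b := mul_le_mul_of_nonneg_left (exp_le_exp.mpr (by linarith)) hy.le
  have hby : b ≤ y := mul_le_of_le_one_right hy.le (exp_le_one_iff.mpr (by linarith))
  -- on `[a, b]` the weight `1 - η / y` is at least `1 - exp (-δ / 2) ≥ δ / (2 + δ)`
  have hwindow : ∀ η ∈ Icc a b, δ / (2 + δ) * m ^ p / η ≤ (1 - η / y) * f η ^ p / η := by
    rintro η ⟨haη, hηb⟩
    have hker : δ / (2 + δ) ≤ 1 - η / y := by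
      have h := div_one_add_le_one_sub_exp_neg (s := δ / 2) (by linarith)
      rw [show δ / 2 / (1 + δ / 2) = δ / (2 + δ) by field_simp] at h
      have : η / y ≤ exp (-(δ / 2)) := by rw [div_le_iff₀ hy]; linarith
      linarith
    have hfη : m ≤ f η := hlow η ⟨by linarith, by linarith⟩
    have : 0 ≤ δ / (2 + δ) := by positivity
    gcongr <;> linarith
  have hlog : log (b / a) = δ / 2 := by
    rw [mul_div_mul_left _ _ hy.ne', ← exp_sub, log_exp]; ring
  have hnonneg : ∀ η ∈ Ioc 1 y, 0 ≤ (1 - η / y) * f η ^ p / η := fun η hη => by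
    have : η / y ≤ 1 := (div_le_one hy).mpr hη.2
    have : 0 ≤ f η := hf₀ η ⟨hη.1.le, by linarith [hη.2]⟩
    have : 0 < η := by linarith [hη.1]
    have : 0 ≤ 1 - η / y := by linarith
    positivity
  have hI := hint y ⟨h1y, hyT⟩
  have hsub : uIcc a b ⊆ uIcc 1 y := by
    rw [uIcc_of_le hab, uIcc_of_le h1y]; exact Icc_subset_Icc (by linarith) hby
  calc 2 * m ≤ D * (δ / (2 + δ) * m ^ p * (δ / 2)) := by
        have hmp : m ^ p = m ^ (p - 1) * m := by rw [rpow_sub_one hm.ne']; field_simp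
        rw [hmp, show D * (δ / (2 + δ) * (m ^ (p - 1) * m) * (δ / 2))
          = D * m ^ (p - 1) * δ ^ 2 * m / (2 * (2 + δ)) by field_simp,
          le_div_iff₀ (by positivity)]
        nlinarith
    _ ≤ D * ∫ η in a..b, (1 - η / y) * f η ^ p / η := by
        gcongr
        rw [← hlog]
        exact mul_log_div_le_integral (by positivity) hab (hI.mono_set hsub) hwindow
    _ ≤ D * ∫ η in (1:ℝ)..y, (1 - η / y) * f η ^ p / η := by
        gcongr
        exact integral_mono_interval (by linarith) hab hby
          ((ae_restrict_iff' measurableSet_Ioc).mpr (ae_of_all _ hnonneg)) hI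
    _ ≤ f y := hineq y ⟨h1y, hyT⟩

theorem two_pow_mul_le_on_Ico_exp_sum {f : ℝ → ℝ} {D p T M : ℝ} {s : ℕ → ℝ} (hD : 0 ≤ D)
    (hp : 0 ≤ p) (hM : 0 < M) (hs : ∀ j, 0 ≤ s j)
    (hint : ∀ y ∈ Ico 1 T, IntervalIntegrable (fun η => (1 - η / y) * f η ^ p / η) volume 1 y)
    (hineq : ∀ y ∈ Ico 1 T, D * ∫ η in (1:ℝ)..y, (1 - η / y) * f η ^ p / η ≤ f y)
    (hlevel : ∀ j, 4 ≤ D * (2 ^ j * M) ^ (p - 1) * s j ^ 2)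
    (hbase : ∀ y ∈ Ico 1 T, M ≤ f y) (j : ℕ) :
    ∀ y ∈ Ico (exp (∑ i ∈ range j, s i * (s i + 2))) T, 2 ^ j * M ≤ f y := by
  induction j with
  | zero => simpa using hbase
  | succ j ih =>
    have hδ (i : ℕ) : 0 ≤ s i * (s i + 2) := by have := hs i; positivity
    -- `D m^{p-1} δ² = D m^{p-1} s² (s+2)² ≥ 4 (s+2)² ≥ 4 (2 + δ)` for `δ = s (s+2)`
    have hcond : 4 * (2 + s j * (s j + 2))
        ≤ D * (2 ^ j * M) ^ (p - 1) * (s j * (s j + 2)) ^ 2 := by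
      have := hs j
      have := hlevel j
      nlinarith
    rw [sum_range_succ, exp_add, pow_succ, mul_comm _ 2, mul_assoc]
    exact two_mul_le_of_le_on_Ico hD hp (by positivity) (one_le_exp (sum_nonneg fun i _ => hδ i))
      (hδ j) (fun y hy => hM.le.trans (hbase y hy)) hint hineq hcond ih

/-- `C*` for `K = C₂ C₁^{p-1}`: the doubling schedule `sⱼ = √(4E/K) · √(2 ^ (1 - p)) ^ j` has total
log-time `∑ sⱼ (sⱼ + 2) ≤ C* E` once `E ≥ 1`. -/
noncomputable def lifespanConst (K p : ℝ) : ℝ :=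
  4 / K / (1 - 2 ^ (1 - p)) + 2 * √(4 / K) / (1 - √(2 ^ (1 - p)))

theorem lifespanConst_pos {K p : ℝ} (hK : 0 < K) (hp : 1 < p) : 0 < lifespanConst K p := by
  have hq : (2 : ℝ) ^ (1 - p) < 1 := rpow_lt_one_of_one_lt_of_neg one_lt_two (by linarith)
  have hq' : √(2 ^ (1 - p)) < 1 := by rw [sqrt_lt' one_pos]; simpa using hq
  have := sub_pos.mpr hq
  have := sub_pos.mpr hq'
  unfold lifespanConst
  positivity

theorem exists_doubling_schedule {D M E K p : ℝ} (hK : 0 < K) (hp : 1 < p) (hM : 0 < M)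
    (hE : 1 ≤ E) (hDME : D * M ^ (p - 1) * E = K) :
    ∃ s : ℕ → ℝ, (∀ j, 0 ≤ s j) ∧ (∀ j, 4 ≤ D * (2 ^ j * M) ^ (p - 1) * s j ^ 2) ∧
      ∀ n, ∑ j ∈ range n, s j * (s j + 2) ≤ lifespanConst K p * E := by
  set q : ℝ := 2 ^ (1 - p)
  have hq : q < 1 := rpow_lt_one_of_one_lt_of_neg one_lt_two (by linarith)
  have hq' : √q < 1 := by rw [sqrt_lt' one_pos]; simpa using hq
  set a := √(4 / K * E)
  refine ⟨fun j => a * √q ^ j, fun j => by positivity, fun j => le_of_eq ?_, fun n => ?_⟩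
  · have h2q : (2 : ℝ) ^ (p - 1) * q = 1 := by rw [← rpow_add two_pos]; simp
    rw [mul_rpow (by positivity) hM.le, ← rpow_pow_comm zero_le_two, mul_pow, ← pow_mul,
      pow_mul', sq_sqrt (by positivity), sq_sqrt (by positivity)]
    calc 4 = 4 / K * (D * M ^ (p - 1) * E) * (2 ^ (p - 1) * q) ^ j := by
          rw [hDME, h2q, one_pow]; field_simp
      _ = _ := by ring
  · have ha : a ≤ √(4 / K) * E := by
      rw [show a = √(4 / K) * √E from sqrt_mul (by positivity) E]
      exact mul_le_mul_of_nonneg_left (sqrt_le_self_iff.mpr (.inr hE)) (sqrt_nonneg _)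
    have := sub_pos.mpr hq'
    calc _ ≤ a ^ 2 / (1 - √q ^ 2) + 2 * a / (1 - √q) :=
          sum_range_geom_mul_add_two_le (sqrt_nonneg _) (sqrt_nonneg _) hq' n
      _ ≤ 4 / K * E / (1 - q) + 2 * (√(4 / K) * E) / (1 - √q) := by
          rw [sq_sqrt (by positivity), sq_sqrt (by positivity)]
          gcongr
      _ = lifespanConst K p * E := by unfold lifespanConst; ring

/-- Lemma A.1, case κ = 1: if f satisfies f(y) ≥ C₁ε^α and
f(y) ≥ C₂ε^β ∫₁^y (1 − η/y) f(η)ᵖ/η dη on [1,T), then f cannot exist on [1,T)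
for T beyond exp(C* ε^{−((p−1)α+β)}); i.e. the lifespan is at most
exp(C* ε^{−((p−1)α+β)}). -/
theorem stmt18 (C₁ C₂ α β p : ℝ) (hC₁ : 0 < C₁) (hC₂ : 0 < C₂)
    (hα : 0 ≤ α) (hβ : 0 ≤ β) (hp : 1 < p) :
    ∃ Cstar : ℝ, 0 < Cstar ∧
      ∀ ε : ℝ, 0 < ε → ε ≤ 1 →
        ∀ T : ℝ, Real.exp (Cstar * ε ^ (-((p - 1) * α + β))) < T →
          ¬ ∃ f : ℝ → ℝ,
            (∀ y ∈ Set.Ico (1:ℝ) T, C₁ * ε ^ α ≤ f y) ∧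
            (∀ y ∈ Set.Ico (1:ℝ) T, IntervalIntegrable
              (fun η => (1 - η / y) * f η ^ p / η) MeasureTheory.volume 1 y) ∧
            (∀ y ∈ Set.Ico (1:ℝ) T,
              C₂ * ε ^ β * ∫ η in (1:ℝ)..y, (1 - η / y) * f η ^ p / η ≤ f y) := by
  have hK : 0 < C₂ * C₁ ^ (p - 1) := by positivity
  refine ⟨lifespanConst _ p, lifespanConst_pos hK hp, ?_⟩
  rintro ε hε hε₁ T hT ⟨f, hbase, hint, hineq⟩
  set E := ε ^ (-((p - 1) * α + β))
  have hE : 1 ≤ E := one_le_rpow_of_pos_of_le_one_of_nonpos hε hε₁ (by nlinarith)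
  set M := C₁ * ε ^ α
  set D := C₂ * ε ^ β
  have hM : 0 < M := by positivity
  have hDME : D * M ^ (p - 1) * E = C₂ * C₁ ^ (p - 1) := by
    rw [mul_rpow hC₁.le (by positivity), ← rpow_mul hε.le,
      show C₂ * ε ^ β * (C₁ ^ (p - 1) * ε ^ (α * (p - 1))) * E
        = C₂ * C₁ ^ (p - 1) * (ε ^ β * ε ^ (α * (p - 1)) * E) by ring,
      ← rpow_add hε, ← rpow_add hε, show β + α * (p - 1) + -((p - 1) * α + β) = 0 by ring,
      rpow_zero, mul_one]
  obtain ⟨s, hs, hlevel, hsum⟩ := exists_doubling_schedule hK hp hM hE hDME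
  have hgrowth (n : ℕ) : 2 ^ n * M ≤ f (exp (lifespanConst _ p * E)) :=
    two_pow_mul_le_on_Ico_exp_sum (by positivity) (by linarith) hM hs hint hineq hlevel hbase n _
      ⟨exp_le_exp.mpr (hsum n), hT⟩
  obtain ⟨n, hn⟩ := pow_unbounded_of_one_lt (f (exp (lifespanConst _ p * E)) / M) one_lt_two
  exact (hgrowth n).not_gt ((div_lt_iff₀ hM).mp hn)
end
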